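/- arXiv:1909.11846 — 7 statements merged into one kernel-verified Lean document; each statement's English description precedes it below -/
import Mathlib

section
/- Let q ≥ 2, m > 3, n = q^m - 1. For all integers x, y with 1 ≤ x, y < n and x·y < q^m - 1 - q^{⌊m/2⌋}, and for all l ∈ {0, 1, ..., m-1}: ((-x·q^l) mod n)·((-y·q^l) mod n) ≥ q^m - 1 - q^{⌊m/2⌋} when m is odd, and ≥ (q^{m/2} - 1)^2 when m is even. -/
/-!
Put `L = q ^ l` and `M = q ^ (m - l)`, so that `n = q ^ m - 1 = L * M - 1` and `L * M ≡ 1 (mod n)`.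
If `a = π + ρ * L` in base `L`, then `(-a * M) % n = (L - 1 - π) * M + (M - 1 - ρ)`: multiplying by
`-M` swaps and complements the two digits. This value is at least `M` unless `π = L - 1`, and a
case analysis on which of `a`, `b` have `π = L - 1` shows that `a * b < n - L` forces the product
of the two values to be at least `n - L`, or `(M - 1) ^ 2` when `L = M`.

If `q ^ l > q ^ (m - l)` this is the claim, with the roles of the two factors exchanged. If
`q ^ l < q ^ (m - l)`, then `z ↦ (-z * L) % n` is the inverse of `a ↦ (-a * M) % n`, so the claim
is the contrapositive of the same bound. If `q ^ l = q ^ (m - l)`, then `m` is even and the bound is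
`(q ^ (m / 2) - 1) ^ 2`.
-/

lemma neg_mul_emod_mul_sub_one (L M a : ℤ) (hL : 0 < L) (ha : 0 < a) (haLM : a < L * M) :
    (-a * M) % (L * M - 1) = (L - 1 - a % L) * M + (M - 1 - a / L) := by
  have hπ0 := Int.emod_nonneg a hL.ne'
  have hπL := Int.emod_lt_of_pos a hL
  have hρ0 : 0 ≤ a / L := Int.ediv_nonneg ha.le hL.le
  have hρM : a / L < M := (Int.ediv_lt_iff_lt_mul hL).2 (by linarith)
  have hsplit := Int.emod_add_ediv_mul a L
  generalize a % L = π, a / L = ρ at *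
  subst hsplit
  have hpos : 1 ≤ π * M + ρ := by
    rcases eq_or_lt_of_le hρ0 with rfl | hρ
    · nlinarith
    · nlinarith
  rw [show -(π + ρ * L) * M = (L - 1 - π) * M + (M - 1 - ρ) + (L * M - 1) * -(ρ + 1) by ring,
    Int.add_mul_emod_self_left]
  exact Int.emod_eq_of_lt (by nlinarith) (by linarith)

/- `a = c * L - 1`, i.e. `a % L = L - 1`, is the only case in which `(-a * M) % (L * M - 1)`,
then equal to `M - c`, is smaller than `M`. -/

lemma le_mul_of_pred_mul_digits (L M c σ τ : ℤ) (hLM : L ≤ M) (hc : 1 ≤ c)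
    (hσ0 : 0 ≤ σ) (hσ : σ ≤ L - 2) (hτ0 : 0 ≤ τ) (hτ : τ < M) (hb : 1 ≤ σ + τ * L)
    (hab : (c * L - 1) * (σ + τ * L) < L * M - 1 - L) :
    L * M - 1 - L ≤ (M - c) * ((L - 1 - σ) * M + (M - 1 - τ)) := by
  rcases eq_or_lt_of_le hτ0 with rfl | hτ1
  · simp only [zero_mul, add_zero, sub_zero] at hab hb ⊢
    rcases eq_or_lt_of_le hb with rfl | hσ2
    · have hc2 : 2 ≤ M - c := by nlinarith
      have := mul_le_mul_of_nonneg_right hc2 (by nlinarith : 0 ≤ (L - 1 - 1) * M + (M - 1))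
      nlinarith
    · have hcσ : c * σ < M := by
        refine lt_of_mul_lt_mul_right (a := L) ?_ (by linarith)
        nlinarith
      have h1 : M + 1 ≤ 2 * (M - c) := by nlinarith
      have h2 : 2 * M - 1 ≤ (L - 1 - σ) * M + (M - 1) := by nlinarith
      have := mul_le_mul h1 h2 (by linarith) (by linarith)
      nlinarith
  · have hbL : L ≤ σ + τ * L := by nlinarith
    have hcL : c * L < M := by
      refine lt_of_mul_lt_mul_right (a := L) ?_ (by linarith)
      nlinarith [mul_le_mul_of_nonneg_left hbL (by nlinarith : 0 ≤ c * L - 1)]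
    have hcM : L ≤ M - c := by nlinarith
    have hGb : M ≤ (L - 1 - σ) * M + (M - 1 - τ) := by nlinarith
    nlinarith

lemma min_le_mul_of_pred_mul_pred (L M c d : ℤ) (hL : 1 ≤ L) (ha : 1 ≤ c * L - 1)
    (hb : 1 ≤ d * L - 1) (hab : (c * L - 1) * (d * L - 1) < L * M - 1 - L) :
    min (L * M - 1 - L) ((M - 1) ^ 2) ≤ (M - c) * (M - d) := by
  have hc : 1 ≤ c := by nlinarith
  have hd : 1 ≤ d := by nlinarith
  have hcM : c < M := by nlinarith
  have hdM : d < M := by nlinarith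
  have hcd0 : 0 ≤ (c - 1) * (d - 1) := mul_nonneg (by linarith) (by linarith)
  rcases eq_or_lt_of_le hL with rfl | hL2
  · have hsum : c + d ≤ M := by nlinarith
    exact (min_le_left _ _).trans (by nlinarith)
  · have hQ : (M - 1) * (M - c * d) ≤ (M - c) * (M - d) := by
      nlinarith [mul_nonneg (by linarith : (0 : ℤ) ≤ M) hcd0]
    by_cases hcd : c * d = 1
    · obtain rfl : c = 1 := by nlinarith
      obtain rfl : d = 1 := by nlinarith
      exact (min_le_right _ _).trans (by nlinarith)
    · have hkey : L * (c * d * (L - 1) - M) < -2 := by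
        nlinarith [mul_nonneg (by linarith : (0 : ℤ) ≤ L) hcd0]
      have hp : c * d + L ≤ M := by
        by_contra! h
        have hp2 : 2 ≤ c * d := by
          have : 1 ≤ c * d := by nlinarith
          omega
        have : L - 3 ≤ c * d * (L - 1) - M := by
          nlinarith [mul_le_mul_of_nonneg_right hp2 (by linarith : (0 : ℤ) ≤ L - 2)]
        nlinarith
      exact (min_le_left _ _).trans (by nlinarith)

lemma min_le_neg_mul_emod_mul (L M a b : ℤ) (hL : 1 ≤ L) (hLM : L ≤ M) (ha : 1 ≤ a)
    (hb : 1 ≤ b) (hab : a * b < L * M - 1 - L) :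
    min (L * M - 1 - L) ((M - 1) ^ 2) ≤ (-a * M) % (L * M - 1) * ((-b * M) % (L * M - 1)) := by
  rw [neg_mul_emod_mul_sub_one L M a (by linarith) (by linarith) (by nlinarith),
    neg_mul_emod_mul_sub_one L M b (by linarith) (by linarith) (by nlinarith)]
  have hπ0 := Int.emod_nonneg a (by linarith : L ≠ 0)
  have hπL := Int.emod_lt_of_pos a (by linarith : 0 < L)
  have hσ0 := Int.emod_nonneg b (by linarith : L ≠ 0)
  have hσL := Int.emod_lt_of_pos b (by linarith : 0 < L)
  have hρ0 : 0 ≤ a / L := Int.ediv_nonneg (by linarith) (by linarith)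
  have hτ0 : 0 ≤ b / L := Int.ediv_nonneg (by linarith) (by linarith)
  have hρM : a / L < M := (Int.ediv_lt_iff_lt_mul (by linarith)).2 (by nlinarith)
  have hτM : b / L < M := (Int.ediv_lt_iff_lt_mul (by linarith)).2 (by nlinarith)
  have hsa := Int.emod_add_ediv_mul a L
  have hsb := Int.emod_add_ediv_mul b L
  generalize a % L = π, a / L = ρ, b % L = σ, b / L = τ at *
  subst hsa hsb
  rcases lt_or_eq_of_le (show π ≤ L - 1 by omega) with hπ | rfl <;>
    rcases lt_or_eq_of_le (show σ ≤ L - 1 by omega) with hσ | rfl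
  · have hGa : M ≤ (L - 1 - π) * M + (M - 1 - ρ) := by nlinarith
    have hGb : M ≤ (L - 1 - σ) * M + (M - 1 - τ) := by nlinarith
    exact (min_le_left _ _).trans (by nlinarith [mul_le_mul hGa hGb (by linarith) (by linarith)])
  · have := le_mul_of_pred_mul_digits L M (τ + 1) π ρ hLM (by linarith) hπ0 (by linarith) hρ0
      hρM ha (by linarith)
    exact (min_le_left _ _).trans (by linarith)
  · have := le_mul_of_pred_mul_digits L M (ρ + 1) σ τ hLM (by linarith) hσ0 (by linarith) hτ0
      hτM hb (by linarith)
    exact (min_le_left _ _).trans (by linarith)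
  · have := min_le_mul_of_pred_mul_pred L M (ρ + 1) (τ + 1) hL (by linarith) (by linarith)
      (by linarith)
    linarith

lemma le_neg_mul_right_emod_mul_of_lt (L M S a b : ℤ) (hL : 1 ≤ L) (hLM : L < M) (hLS : L ≤ S)
    (ha : 1 ≤ a) (hb : 1 ≤ b) (hab : a * b < L * M - 1 - S) :
    L * M - 1 - S ≤ (-a * M) % (L * M - 1) * ((-b * M) % (L * M - 1)) := by
  have hmin := min_le_neg_mul_emod_mul L M a b hL hLM.le ha hb (by linarith)
  rw [min_eq_left (by nlinarith)] at hmin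
  linarith

lemma neg_mul_emod_neg_mul_emod (L M x : ℤ) (hx0 : 0 ≤ x) (hx : x < L * M - 1) :
    (-((-x * L) % (L * M - 1)) * M) % (L * M - 1) = x := by
  have hmod : -((-x * L) % (L * M - 1)) * M ≡ x [ZMOD L * M - 1] :=
    calc -((-x * L) % (L * M - 1)) * M ≡ -(-x * L) * M [ZMOD L * M - 1] :=
          (Int.mod_modEq _ _).neg.mul_right _
      _ = x + (L * M - 1) * x := by ring
      _ ≡ x [ZMOD L * M - 1] := Int.add_mul_emod_self_left x _ x
  rw [hmod, Int.emod_eq_of_lt hx0 hx]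

lemma one_le_neg_mul_emod (L M x : ℤ) (hx : 1 ≤ x) (hxn : x < L * M - 1) :
    1 ≤ (-x * L) % (L * M - 1) := by
  have hinv := neg_mul_emod_neg_mul_emod L M x (by linarith) hxn
  refine lt_of_le_of_ne (Int.emod_nonneg _ (by linarith)) fun h0 => ?_
  rw [← h0, neg_zero, zero_mul, Int.zero_emod] at hinv
  linarith

lemma le_neg_mul_left_emod_mul_of_lt (L M S x y : ℤ) (hL : 1 ≤ L) (hLM : L < M) (hLS : L ≤ S)
    (hx : 1 ≤ x) (hxn : x < L * M - 1) (hy : 1 ≤ y) (hyn : y < L * M - 1)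
    (hxy : x * y < L * M - 1 - S) :
    L * M - 1 - S ≤ (-x * L) % (L * M - 1) * ((-y * L) % (L * M - 1)) := by
  by_contra! h
  have := le_neg_mul_right_emod_mul_of_lt L M S _ _ hL hLM hLS (one_le_neg_mul_emod L M x hx hxn)
    (one_le_neg_mul_emod L M y hy hyn) h
  rw [neg_mul_emod_neg_mul_emod L M x (by linarith) hxn,
    neg_mul_emod_neg_mul_emod L M y (by linarith) hyn] at this
  linarith

lemma ite_le_pow_sub (q : ℤ) (hq : 2 ≤ q) (m : ℕ) (hm : 0 < m) :
    (if m % 2 = 1 then q ^ m - 1 - q ^ (m / 2) else (q ^ (m / 2) - 1) ^ 2) ≤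
      q ^ m - 1 - q ^ (m / 2) := by
  split_ifs with hodd
  · exact le_rfl
  · have hsq : q ^ m = q ^ (m / 2) * q ^ (m / 2) := by rw [← pow_add]; congr 1; omega
    have : q ≤ q ^ (m / 2) := le_self_pow₀ (by linarith) (by omega)
    nlinarith

theorem stmt_4_general (q : ℤ) (hq : 2 ≤ q) (m : ℕ) :
    ∀ x y : ℤ, 1 ≤ x → x < q ^ m - 1 → 1 ≤ y → y < q ^ m - 1 →
      x * y < q ^ m - 1 - q ^ (m / 2) →
      ∀ l : ℕ, l ≤ m - 1 →
        ((-x * q ^ l) % (q ^ m - 1)) * ((-y * q ^ l) % (q ^ m - 1)) ≥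
          (if m % 2 = 1 then q ^ m - 1 - q ^ (m / 2) else (q ^ (m / 2) - 1) ^ 2) := by
  intro x y hx hxn hy hyn hxy l hl
  have hm : 0 < m := Nat.pos_of_ne_zero (by rintro rfl; rw [pow_zero, sub_self] at hxn; linarith)
  have hT := ite_le_pow_sub q hq m hm
  have hpos : ∀ i : ℕ, 1 ≤ q ^ i := fun i => one_le_pow₀ (by linarith)
  have hmono : ∀ {i j : ℕ}, i ≤ j → q ^ i ≤ q ^ j := pow_le_pow_right₀ (by linarith)
  have hsplit : q ^ m = q ^ l * q ^ (m - l) := by rw [← pow_add]; congr 1; omega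
  rw [ge_iff_le]
  rcases lt_trichotomy l (m - l) with h | h | h
  · rw [hsplit] at hxn hyn hxy hT ⊢
    exact hT.trans (le_neg_mul_left_emod_mul_of_lt _ _ _ x y (hpos l)
      (pow_lt_pow_right₀ (by linarith) h) (hmono (by omega)) hx hxn hy hyn hxy)
  · have hhalf : m / 2 = l := by omega
    rw [if_neg (by omega), hhalf]
    rw [hsplit, ← h, hhalf] at hxy
    rw [hsplit, ← h]
    have hL2 : q ≤ q ^ l := le_self_pow₀ (by linarith) (by omega)
    have hmin := min_le_neg_mul_emod_mul _ _ x y (hpos l) le_rfl hx hy (by linarith)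
    rwa [min_eq_right (by nlinarith)] at hmin
  · rw [hsplit, mul_comm (q ^ l)] at hxy hT ⊢
    exact hT.trans (le_neg_mul_right_emod_mul_of_lt _ _ _ x y (hpos _)
      (pow_lt_pow_right₀ (by linarith) h) (hmono (by omega)) hx hy hxy)

/-- Key inequality: for 1 ≤ x, y < n = q^m - 1 with x·y < q^m - 1 - q^⌊m/2⌋ and any
0 ≤ l ≤ m-1, the product ((-x·q^l) mod n)·((-y·q^l) mod n) is at least
q^m - 1 - q^⌊m/2⌋ when m is odd, and at least (q^{m/2} - 1)^2 when m is even. -/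
theorem stmt_4 (q : ℤ) (hq : 2 ≤ q) (m : ℕ) (hm : 3 < m) :
    ∀ x y : ℤ, 1 ≤ x → x < q ^ m - 1 → 1 ≤ y → y < q ^ m - 1 →
      x * y < q ^ m - 1 - q ^ (m / 2) →
      ∀ l : ℕ, l ≤ m - 1 →
        ((-x * q ^ l) % (q ^ m - 1)) * ((-y * q ^ l) % (q ^ m - 1)) ≥
          (if m % 2 = 1 then q ^ m - 1 - q ^ (m / 2) else (q ^ (m / 2) - 1) ^ 2) :=
  stmt_4_general q hq m
end

section
/- Let q ≥ 2, m > 3, n = q^m - 1 with m odd. Suppose 1 ≤ x, y < n satisfy x·y < q^m - 1 - q^{(m-1)/2}, with x having top nonzero q-ary digit at position k ≤ (m-1)/2, and let l = m - k - 1. Then ((-x·q^l) mod n)·((-y·q^l) mod n) ≥ q^m - 1. -/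
/-!
Put `n = q^(2s+1) - 1`, `L = q^(2s-k)` and `K = q^(k+1)`, so that `L * K = n + 1`. As `x < K`, the
first residue is `n - x L ≥ L - 1`. If `k = s`, then `y q^s ≤ x y < n` too, both residues are
explicit, and the claim is a polynomial inequality in `Q = q^s`. If `k < s`, the second residue `B`
satisfies `B K + y ≡ 0 (mod n)` with `B K + y > 0`, hence `B K ≥ n - y`; it then suffices that
`(n - x L)(n - y) ≥ n K`, which `x y < n - q^s` gives.
-/

lemma neg_emod_eq_sub_of_pos_of_le {a n : ℤ} (ha : 0 < a) (han : a ≤ n) : -a % n = n - a := by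
  rw [Int.neg_emod_eq_sub_emod, Int.emod_eq_of_lt] <;> omega

lemma sub_le_neg_mul_emod_mul {n y L K : ℤ} (hn : 0 < n) (hy : 0 < y) (hK : 0 < K)
    (hLK : L * K = n + 1) : n - y ≤ -y * L % n * K := by
  have hdvd : n ∣ -y * L % n * K + y := by
    refine Int.modEq_zero_iff_dvd.1 ?_
    calc -y * L % n * K + y ≡ -y * L * K + y [ZMOD n] :=
          ((Int.mod_modEq _ _).mul_right _).add_right _
      _ = n * -y := by linear_combination -y * hLK
      _ ≡ 0 [ZMOD n] := Int.modEq_zero_iff_dvd.2 (dvd_mul_right _ _)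
  have hpos : 0 < -y * L % n * K + y := by
    have := Int.emod_nonneg (-y * L) hn.ne'
    positivity
  linarith [Int.le_of_dvd hpos hdvd]

lemma le_sub_mul_mul_sub_mul {q Q n x y : ℤ} (hq : 2 ≤ q) (hQ : 4 ≤ Q)
    (hn : n + 1 = q * Q ^ 2) (hx : Q ≤ x) (hx' : x ≤ q * Q - 1) (hxy : x * y ≤ n - Q - 1) :
    n ≤ (n - x * Q) * (n - y * Q) := by
  -- both factors are at least `Q - 1` and their sum is at least `n - Q^2 + Q - 1`
  have hsum : x + y ≤ (q + 1) * Q - 1 := by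
    rcases le_or_gt y Q with hyQ | hyQ
    · linarith
    · nlinarith [mul_nonneg (sub_nonneg.2 hx) (sub_nonneg.2 hyQ.le)]
  have hu : Q - 1 ≤ n - x * Q := by nlinarith
  have hv : Q - 1 ≤ n - y * Q := by nlinarith
  nlinarith [mul_nonneg (sub_nonneg.2 hu) (sub_nonneg.2 hv),
    mul_nonneg (sub_nonneg.2 hq) (sq_nonneg Q)]

lemma mul_le_mul_sub_of_two_le {n x y A K S : ℤ} (hn : 0 ≤ n) (hK : 0 < K) (hx : 2 ≤ x)
    (hxy : x * y ≤ n - S - 1) (hA : 2 * K - 1 ≤ A) (hAS : n ≤ A * (S + 1)) :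
    n * K ≤ A * (n - y) := by
  -- `x A (n - y) ≥ A (n (x - 1) + S + 1) ≥ n (A (x - 1) + 1) ≥ n K x`
  have hxn : n * (x - 1) + S + 1 ≤ x * (n - y) := by linarith
  have hxA : K * x ≤ A * (x - 1) + 1 := by
    nlinarith [mul_le_mul_of_nonneg_left (by linarith : (1 : ℤ) ≤ x - 1)
      (by linarith : 0 ≤ A - K)]
  have : x * (n * K) ≤ x * (A * (n - y)) := by
    nlinarith [mul_le_mul_of_nonneg_left hxn (by linarith : 0 ≤ A),
      mul_le_mul_of_nonneg_left hxA hn]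
  exact le_of_mul_le_mul_left this (by linarith)

lemma mul_le_sub_sq_mul_sub {q S n y : ℤ} (hq : 2 ≤ q) (hS : q ^ 2 ≤ S)
    (hn : n + 1 = q * S ^ 2) (hy : y ≤ n - S - 1) : n * q ≤ (n - S ^ 2) * (n - y) := by
  obtain rfl : n = q * S ^ 2 - 1 := by linarith
  have hS4 : 4 ≤ S := by nlinarith
  have hA : 0 ≤ q * S ^ 2 - 1 - S ^ 2 := by
    nlinarith [mul_le_mul_of_nonneg_right (by linarith : 1 ≤ q - 1) (sq_nonneg S)]
  have hAS : (q * S ^ 2 - 1) * q ≤ (q * S ^ 2 - 1 - S ^ 2) * (S + 1) := by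
    nlinarith [mul_nonneg (sub_nonneg.2 hS) (sq_nonneg S),
      mul_nonneg (by linarith : (0 : ℤ) ≤ q - 2) (pow_nonneg (by linarith : (0 : ℤ) ≤ S) 3)]
  nlinarith [mul_le_mul_of_nonneg_left (by linarith : S + 1 ≤ q * S ^ 2 - 1 - y) hA]

lemma le_neg_mul_emod_mul_neg_mul_emod_of_eq {q x y : ℤ} {s : ℕ} (hq : 2 ≤ q) (hs : 2 ≤ s)
    (hx : q ^ s ≤ x) (hx' : x ≤ q ^ (s + 1) - 1) (hy : 1 ≤ y)
    (hxy : x * y < q ^ (2 * s + 1) - 1 - q ^ s) :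
    q ^ (2 * s + 1) - 1 ≤
      -x * q ^ s % (q ^ (2 * s + 1) - 1) * (-y * q ^ s % (q ^ (2 * s + 1) - 1)) := by
  set Q := q ^ s
  set n := q ^ (2 * s + 1) - 1
  have hn : n + 1 = q * Q ^ 2 := by simp only [n, Q]; ring
  have hQ : 4 ≤ Q := by
    calc (4 : ℤ) ≤ q ^ 2 := by nlinarith
      _ ≤ Q := pow_le_pow_right₀ (by linarith) hs
  have hx'' : x ≤ q * Q - 1 := by rw [pow_succ'] at hx'; exact hx'
  have hyQ : y * Q ≤ x * y := by nlinarith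
  rw [neg_mul, neg_emod_eq_sub_of_pos_of_le (by nlinarith) (by nlinarith),
    neg_mul, neg_emod_eq_sub_of_pos_of_le (by nlinarith) (by linarith)]
  exact le_sub_mul_mul_sub_mul hq hQ hn hx hx'' (by linarith)

lemma le_neg_mul_emod_mul_neg_mul_emod_of_lt {q x y : ℤ} {s k : ℕ} (hq : 2 ≤ q) (hs : 2 ≤ s)
    (hks : k < s) (hx : q ^ k ≤ x) (hx' : x ≤ q ^ (k + 1) - 1) (hy : 1 ≤ y)
    (hxy : x * y < q ^ (2 * s + 1) - 1 - q ^ s) :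
    q ^ (2 * s + 1) - 1 ≤ -x * q ^ (2 * s - k) % (q ^ (2 * s + 1) - 1) *
      (-y * q ^ (2 * s - k) % (q ^ (2 * s + 1) - 1)) := by
  have hq1 : 1 ≤ q := by linarith
  have hx1 : 1 ≤ x := le_trans (one_le_pow₀ hq1) hx
  set S := q ^ s
  set L := q ^ (2 * s - k)
  set K := q ^ (k + 1)
  set n := q ^ (2 * s + 1) - 1
  have hLK : L * K = n + 1 := by
    simp only [L, K, n, ← pow_add, sub_add_cancel]; congr 1; omega
  have hqK : q ≤ K := le_self_pow₀ hq1 (by omega)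
  have hKS : K ≤ S := pow_le_pow_right₀ hq1 hks
  have hqKL : q * K ≤ L := by
    rw [← pow_succ']; exact pow_le_pow_right₀ hq1 (by omega)
  have hSL : S ≤ L := pow_le_pow_right₀ hq1 (by omega)
  have hn : 0 < n := by nlinarith
  have hA : L - 1 ≤ n - x * L := by nlinarith
  have hkey : n * K ≤ (n - x * L) * (n - y) := by
    rcases hx1.eq_or_lt with rfl | hx2
    · obtain rfl : k = 0 := by
        by_contra hk
        linarith [(pow_le_pow_right₀ hq1 (Nat.one_le_iff_ne_zero.2 hk) : q ^ 1 ≤ q ^ k)]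
      have hL : L = S ^ 2 := by simp only [L, S, ← pow_mul]; congr 1; omega
      have hK : K = q := pow_one q
      rw [hL, hK, one_mul]
      exact mul_le_sub_sq_mul_sub hq (pow_le_pow_right₀ hq1 hs)
        (by rw [← hLK, hL, hK, mul_comm]) (by linarith)
    · have hAS : n ≤ (n - x * L) * (S + 1) := by
        nlinarith [mul_le_mul_of_nonneg_right hA (by linarith : 0 ≤ S + 1),
          mul_nonneg (by linarith : 0 ≤ L) (sub_nonneg.2 hKS)]
      exact mul_le_mul_sub_of_two_le hn.le (by linarith) hx2 (by linarith) (by nlinarith) hAS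
  rw [neg_mul, neg_emod_eq_sub_of_pos_of_le (by nlinarith) (by nlinarith)]
  have hB := sub_le_neg_mul_emod_mul hn (by linarith : 0 < y) (by linarith) hLK
  refine le_of_mul_le_mul_right ?_ (by linarith : 0 < K)
  calc n * K ≤ (n - x * L) * (n - y) := hkey
    _ ≤ (n - x * L) * (-y * L % n * K) := mul_le_mul_of_nonneg_left hB (by nlinarith)
    _ = (n - x * L) * (-y * L % n) * K := by ring

theorem stmt_6_general (q : ℤ) (hq : 2 ≤ q) (m : ℕ) (hm : 3 < m) (hmo : m % 2 = 1)
    (x y : ℤ) (k : ℕ)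
    (hy1 : 1 ≤ y)
    (hxy : x * y < q ^ m - 1 - q ^ ((m - 1) / 2))
    (hxk : q ^ k ≤ x) (hxk' : x ≤ q ^ (k + 1) - 1) (hk : k ≤ (m - 1) / 2) :
    ((-x * q ^ (m - k - 1)) % (q ^ m - 1)) * ((-y * q ^ (m - k - 1)) % (q ^ m - 1)) ≥
      q ^ m - 1 := by
  obtain ⟨s, rfl⟩ : ∃ s, m = 2 * s + 1 := ⟨m / 2, by omega⟩
  have hs : 2 ≤ s := by omega
  rw [show (2 * s + 1 - 1) / 2 = s by omega] at hxy hk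
  rw [show 2 * s + 1 - k - 1 = 2 * s - k by omega]
  rcases hk.lt_or_eq with hks | hks
  · exact le_neg_mul_emod_mul_neg_mul_emod_of_lt hq hs hks hxk hxk' hy1 hxy
  · subst k
    rw [show 2 * s - s = s by omega]
    exact le_neg_mul_emod_mul_neg_mul_emod_of_eq hq hs hxk hxk' hy1 hxy

/-- Odd-m subcase of case ii) of Lemma 4: for l = m - k - 1 the product of residues
is at least q^m - 1. -/
theorem stmt_6 (q : ℤ) (hq : 2 ≤ q) (m : ℕ) (hm : 3 < m) (hmo : m % 2 = 1)
    (x y : ℤ) (k : ℕ)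
    (hx1 : 1 ≤ x) (hxn : x < q ^ m - 1) (hy1 : 1 ≤ y) (hyn : y < q ^ m - 1)
    (hxy : x * y < q ^ m - 1 - q ^ ((m - 1) / 2))
    (hxk : q ^ k ≤ x) (hxk' : x ≤ q ^ (k + 1) - 1) (hk : k ≤ (m - 1) / 2) :
    ((-x * q ^ (m - k - 1)) % (q ^ m - 1)) * ((-y * q ^ (m - k - 1)) % (q ^ m - 1)) ≥
      q ^ m - 1 :=
  stmt_6_general q hq m hm hmo x y k hy1 hxy hxk hxk' hk
end

section
/- Let q ≥ 2, m > 3, n = q^m - 1 with m even. Suppose 1 ≤ x, y < n satisfy x·y < q^m - 1 - q^{m/2}, with x having top nonzero q-ary digit at position k ≤ (m-1)/2, and let l = m - k - 1. Then ((-x·q^l) mod n)·((-y·q^l) mod n) ≥ (q^{m/2} - 1)^2, with equality attained for some such x, y when k = m/2 - 1. -/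
private lemma key1 (E L H B : ℤ) (hE : 2 ≤ E) (hEH : E ≤ H) (hHL : H ≤ L)
    (hEL : E * L = H ^ 2) (hH : 4 ≤ H) (hB1 : 1 ≤ B) (hB2 : B ≤ H - 2)
    (hEB : H + 1 ≤ E * B) :
    (H ^ 2 - 1 - L) * B ≥ (H - 1) ^ 2 := by
  nlinarith [mul_nonneg (show (0:ℤ) ≤ E - 2 by omega) (show (0:ℤ) ≤ H - E by omega),
    mul_nonneg (show (0:ℤ) ≤ E*B - H - 1 by omega) (show (0:ℤ) ≤ L - H by omega),
    mul_nonneg (show (0:ℤ) ≤ E*B - H - 1 by omega) (show (0:ℤ) ≤ H - E by omega),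
    mul_pos (show (0:ℤ) < E by omega) (show (0:ℤ) < B by omega),
    mul_nonneg (mul_nonneg (show (0:ℤ) ≤ E - 2 by omega) (show (0:ℤ) ≤ H - E by omega)) (show (0:ℤ) ≤ B by omega)]

private lemma key2 (E L H B x : ℤ) (hE : 2 ≤ E) (hEH : E ≤ H) (hHL : H ≤ L)
    (hEL : E * L = H ^ 2) (hH : 4 ≤ H) (hB1 : 1 ≤ B) (hB2 : B ≤ H - 2)
    (hx : 2 ≤ x) (hxE : x ≤ E - 1)
    (hc : x * (H ^ 2 - E * B - 1) ≤ H ^ 2 - H - 2) :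
    (H ^ 2 - 1 - x * L) * B ≥ (H - 1) ^ 2 := by
  have hy0 : E * B ≤ H ^ 2 - 2 * H := by
    nlinarith [mul_le_mul hEH hB2 (by omega : (0:ℤ) ≤ B) (by omega : (0:ℤ) ≤ H)]
  have hEB : H ^ 2 + H ≤ 2 * (E * B) := by
    nlinarith [mul_nonneg (show (0:ℤ) ≤ x - 2 by omega) (show (0:ℤ) ≤ H^2 - E*B - 1 by omega)]
  nlinarith [mul_nonneg (show (0:ℤ) ≤ E - 2 by omega) (show (0:ℤ) ≤ H - E by omega),
    mul_nonneg (show (0:ℤ) ≤ 2*(E*B) - H^2 - H by omega) (show (0:ℤ) ≤ L - H by omega),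
    mul_nonneg (show (0:ℤ) ≤ H - 2 - B by omega) (show (0:ℤ) ≤ x - 2 by omega),
    mul_nonneg (show (0:ℤ) ≤ E - 1 - x by omega) (show (0:ℤ) ≤ B - 1 by omega),
    mul_pos (show (0:ℤ) < E by omega) (show (0:ℤ) < B by omega),
    mul_le_mul_of_nonneg_left hc (show (0:ℤ) ≤ B by omega),
    mul_le_mul_of_nonneg_left hc (show (0:ℤ) ≤ L by omega)]

private lemma sum_le (E L y1 y2 : ℤ) (hE : 2 ≤ E) (hL : 1 ≤ L) (h1 : 0 ≤ y1)
    (h2 : y1 ≤ E - 1) (h3 : 0 ≤ y2) (h4 : y2 ≤ L - 1)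
    (hyn : E * y2 + y1 ≤ E * L - 2) : y1 * L + y2 ≤ E * L - 2 := by
  rcases le_or_gt y1 (E - 2) with hc1 | hc1
  · nlinarith [mul_le_mul_of_nonneg_right hc1 (show (0:ℤ) ≤ L by omega)]
  · have hy1e : y1 = E - 1 := by omega
    subst hy1e
    have hy2b2 : y2 ≤ L - 2 := by nlinarith
    nlinarith

private lemma sum_pos (E L y1 y2 : ℤ) (hE : 2 ≤ E) (hL : 1 ≤ L) (h1 : 0 ≤ y1)
    (h3 : 0 ≤ y2) (hy : 1 ≤ E * y2 + y1) : 1 ≤ y1 * L + y2 := by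
  rcases le_or_gt 1 y2 with hc1 | hc1
  · nlinarith [mul_nonneg h1 (show (0:ℤ) ≤ L by omega)]
  · have h0 : y2 = 0 := by omega
    subst h0
    nlinarith

private lemma core (E L H x y1 y2 : ℤ) (hE : 2 ≤ E) (hEH : E ≤ H) (hHL : H ≤ L)
    (hEL : E * L = H ^ 2) (hH : 4 ≤ H)
    (hx1 : 1 ≤ x) (hx2 : x ≤ E - 1)
    (hy1a : 0 ≤ y1) (hy1b : y1 ≤ E - 1) (hy2a : 0 ≤ y2) (hy2b : y2 ≤ L - 1)
    (hyn : E * y2 + y1 ≤ E * L - 2)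
    (hxy : x * (E * y2 + y1) ≤ H ^ 2 - H - 2) :
    (H ^ 2 - 1 - x * L) * (H ^ 2 - 1 - (y1 * L + y2)) ≥ (H - 1) ^ 2 := by
  have hL1 : (1:ℤ) ≤ L := by omega
  have hxL : x * L ≤ E * L - L := by
    calc x * L ≤ (E - 1) * L := mul_le_mul_of_nonneg_right hx2 (by omega)
    _ = E * L - L := by ring
  have hA : H - 1 ≤ H ^ 2 - 1 - x * L := by
    have : E * L - L ≤ H ^ 2 - L := by omega
    omega
  have hsum : y1 * L + y2 ≤ E * L - 2 := sum_le E L y1 y2 hE hL1 hy1a hy1b hy2a hy2b hyn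
  have hB1 : 1 ≤ H ^ 2 - 1 - (y1 * L + y2) := by omega
  rcases le_or_gt (H - 1) (H ^ 2 - 1 - (y1 * L + y2)) with hBc | hBc
  · calc (H - 1) ^ 2 = (H - 1) * (H - 1) := by ring
    _ ≤ (H ^ 2 - 1 - x * L) * (H ^ 2 - 1 - (y1 * L + y2)) :=
        mul_le_mul hA hBc (by omega) (by omega)
  · -- hard case: B ≤ H - 2
    have hy1e : y1 = E - 1 := by
      by_contra hcon
      have hy1le : y1 ≤ E - 2 := by omega
      have h1 : y1 * L ≤ (E - 2) * L := mul_le_mul_of_nonneg_right hy1le (by omega)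
      have h2 : (E - 2) * L = E * L - 2 * L := by ring
      omega
    subst hy1e
    have hB2 : H ^ 2 - 1 - ((E - 1) * L + y2) ≤ H - 2 := by omega
    have hid : E * y2 + (E - 1) = H ^ 2 - E * (H ^ 2 - 1 - ((E - 1) * L + y2)) - 1 := by
      linear_combination (1 - E) * hEL
    have hc : x * (H ^ 2 - E * (H ^ 2 - 1 - ((E - 1) * L + y2)) - 1) ≤ H ^ 2 - H - 2 := by
      rw [← hid]; exact hxy
    rcases le_or_gt 2 x with hx2' | hx2'
    · exact key2 E L H _ x hE hEH hHL hEL hH hB1 hB2 hx2' (by omega) hc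
    · have hx1e : x = 1 := by omega
      subst hx1e
      rw [one_mul] at hc ⊢
      exact key1 E L H _ hE hEH hHL hEL hH hB1 hB2 (by omega)

/-- Even-m subcase of case ii) of Lemma 4: for l = m - k - 1 the product of residues
is at least (q^{m/2} - 1)^2, with equality attained for some admissible x, y when
k = m/2 - 1. -/
theorem stmt_7 (q : ℤ) (hq : 2 ≤ q) (m : ℕ) (hm : 3 < m) (hme : m % 2 = 0) :
    (∀ x y : ℤ, ∀ k : ℕ, 1 ≤ x → x < q ^ m - 1 → 1 ≤ y → y < q ^ m - 1 →
      x * y < q ^ m - 1 - q ^ (m / 2) →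
      q ^ k ≤ x → x ≤ q ^ (k + 1) - 1 → k ≤ (m - 1) / 2 →
      ((-x * q ^ (m - k - 1)) % (q ^ m - 1)) * ((-y * q ^ (m - k - 1)) % (q ^ m - 1)) ≥
        (q ^ (m / 2) - 1) ^ 2) ∧
    (∃ x y : ℤ, 1 ≤ x ∧ x < q ^ m - 1 ∧ 1 ≤ y ∧ y < q ^ m - 1 ∧
      x * y < q ^ m - 1 - q ^ (m / 2) ∧
      q ^ (m / 2 - 1) ≤ x ∧ x ≤ q ^ (m / 2) - 1 ∧
      ((-x * q ^ (m - (m / 2 - 1) - 1)) % (q ^ m - 1)) *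
        ((-y * q ^ (m - (m / 2 - 1) - 1)) % (q ^ m - 1)) = (q ^ (m / 2) - 1) ^ 2) := by
  have hq1 : (1:ℤ) ≤ q := by omega
  set h := m / 2 with hh_def
  have hm2 : m = 2 * h := by omega
  have hh2 : 2 ≤ h := by omega
  set H := q ^ h with hH_def
  have hpow : ∀ t : ℕ, (1:ℤ) ≤ q ^ t := fun t => one_le_pow₀ hq1
  have hmono : ∀ s t : ℕ, s ≤ t → q ^ s ≤ q ^ t := fun s t hst => pow_le_pow_right₀ hq1 hst
  have hH4 : 4 ≤ H := by
    calc (4:ℤ) = 2 ^ 2 := by norm_num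
    _ ≤ q ^ 2 := pow_le_pow_left₀ (by norm_num) hq 2
    _ ≤ q ^ h := hmono 2 h hh2
  have hqm : q ^ m = H ^ 2 := by
    rw [hH_def, ← pow_mul]; congr 1; omega
  have hHsq : 4 * H ≤ H ^ 2 := by nlinarith
  constructor
  · intro x y k hx1 hxn hy1 hyn hxy hxk hxk2 hk
    have hk' : k + 1 ≤ h := by omega
    set l := m - k - 1 with hl_def
    have hlh : h ≤ l := by omega
    set E := q ^ (k + 1) with hE_def
    set L := q ^ l with hL_def
    have hE2 : 2 ≤ E := by
      calc (2:ℤ) ≤ q := hq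
      _ = q ^ 1 := (pow_one q).symm
      _ ≤ E := hmono 1 (k+1) (by omega)
    have hEH : E ≤ H := hmono (k+1) h hk'
    have hHL : H ≤ L := hmono h l hlh
    have hEL : E * L = H ^ 2 := by
      rw [hE_def, hL_def, ← pow_add, ← hqm]; congr 1; omega
    have hL1 : (1:ℤ) ≤ L := hpow l
    have hNH : q ^ m - 1 = E * L - 1 := by rw [hqm, ← hEL]
    -- bounds on x * L
    have hxL : x * L ≤ E * L - L := by
      calc x * L ≤ (E - 1) * L := mul_le_mul_of_nonneg_right hxk2 (by omega)
      _ = E * L - L := by ring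
    have hxLpos : 0 < x * L := mul_pos (by omega) (by omega)
    have hA : (-x * L) % (q ^ m - 1) = (q ^ m - 1) - x * L := by
      have h1 : -x * L = ((q ^ m - 1) - x * L) + (q ^ m - 1) * (-1) := by ring
      rw [h1, Int.add_mul_emod_self_left, Int.emod_eq_of_lt (by omega) (by omega)]
    -- digits of y
    set y2 := y / E with hy2_def
    set y1 := y % E with hy1_def
    have hyd : y = E * y2 + y1 := (Int.mul_ediv_add_emod y E).symm
    have hy1a : 0 ≤ y1 := Int.emod_nonneg y (by omega)
    have hy1b : y1 < E := Int.emod_lt_of_pos y (by omega)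
    have hy2a : 0 ≤ y2 := Int.ediv_nonneg (by omega) (by omega)
    have hy2b : y2 ≤ L - 1 := by
      by_contra hcon
      push_neg at hcon
      have h1 : E * L ≤ E * y2 := mul_le_mul_of_nonneg_left (by omega) (by omega)
      omega
    have hyn' : E * y2 + y1 ≤ E * L - 2 := by omega
    have hsum : y1 * L + y2 ≤ E * L - 2 :=
      sum_le E L y1 y2 hE2 hL1 hy1a (by omega) hy2a hy2b hyn'
    have hspos : 1 ≤ y1 * L + y2 :=
      sum_pos E L y1 y2 hE2 hL1 hy1a hy2a (by omega)
    have hB : (-y * L) % (q ^ m - 1) = (q ^ m - 1) - (y1 * L + y2) := by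
      have h1 : -y * L = ((q ^ m - 1) - (y1 * L + y2)) + (q ^ m - 1) * (-(y2 + 1)) := by
        have hNE : q ^ m = E * L := by omega
        linear_combination (-(L : ℤ)) * hyd + y2 * hNE
      rw [h1, Int.add_mul_emod_self_left, Int.emod_eq_of_lt (by omega) (by omega)]
    rw [hA, hB]
    have hxy' : x * (E * y2 + y1) ≤ H ^ 2 - H - 2 := by
      rw [← hyd]
      have h1 : x * y < q ^ m - 1 - H := hxy
      have h2 : q ^ m = H ^ 2 := hqm
      omega
    have hcore := core E L H x y1 y2 hE2 hEH hHL hEL hH4 hx1 hxk2 hy1a (by omega)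
      hy2a hy2b hyn' hxy'
    have hN2 : q ^ m - 1 = H ^ 2 - 1 := by omega
    rw [hN2]
    exact hcore
  · have hqh1 : q * q ^ (h - 1) = H := by
      rw [hH_def, ← pow_succ']; congr 1; omega
    have hpow1 : (1:ℤ) ≤ q ^ (h - 1) := hpow (h - 1)
    have hxlow : q ^ (h - 1) ≤ H - 1 := by
      have h2 : 2 * q ^ (h - 1) ≤ q * q ^ (h - 1) :=
        mul_le_mul_of_nonneg_right hq (by omega)
      omega
    refine ⟨H - 1, H - 1, by omega, by omega, by omega, by omega, ?_, hxlow, le_refl _, ?_⟩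
    · have hprod : (H - 1) * (H - 1) = H ^ 2 - 2 * H + 1 := by ring
      omega
    · have hexp : m - (h - 1) - 1 = h := by omega
      rw [hexp]
      have hres : (-(H - 1) * q ^ h) % (q ^ m - 1) = H - 1 := by
        have h1 : -(H - 1) * q ^ h = (H - 1) + (q ^ m - 1) * (-1) := by
          rw [hqm, hH_def]; ring
        rw [h1, Int.add_mul_emod_self_left, Int.emod_eq_of_lt (by omega) (by omega)]
      rw [hres]; ring
end

section
/- Let q ≥ 2, m > 3, n = q^m - 1. Suppose 1 ≤ x, y < n with x·y < q^m - 1 - q^{⌊m/2⌋}, where x has top nonzero q-ary digit at position k ≤ (m-1)/2, and let l satisfy m - k - 1 < l ≤ m - 1. Then ((-x·q^l) mod n)·((-y·q^l) mod n) ≥ q^m - 1. -/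
/-!
Put `t = m - l`, so `t ≤ k`. Since `q ^ m ≡ 1` modulo `n = q ^ m - 1`, the residue `r` of
`-z * q ^ l` satisfies `r * q ^ t ≡ -z`, hence `r * q ^ t ≥ n - z` as soon as `z ≥ 1`.
For `z = x` this gives `r_x * q ^ t ≥ q ^ m - q ^ (k + 1)`, and for `z = y`, using
`y * q ^ k ≤ x * y < n`, it gives `r_y * q ^ t * q ^ k ≥ n * (q ^ k - 1)`. As
`q ^ (2 * t) ≤ q ^ (2 * k)`, the claim reduces to
`q ^ (3 * k) ≤ (q ^ m - q ^ (k + 1)) * (q ^ k - 1)`, which holds since `m ≥ 2 * k + 1` and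
`m ≥ k + 3`.
-/

theorem sub_le_neg_mul_pow_emod_mul_pow {q : ℤ} (hq : 0 ≤ q) {m l : ℕ} (hl : l ≤ m)
    (hn : 0 < q ^ m - 1) {z : ℤ} (hz : 0 < z) :
    q ^ m - 1 - z ≤ (-z * q ^ l) % (q ^ m - 1) * q ^ (m - l) := by
  have hsplit : q ^ l * q ^ (m - l) = q ^ m := by rw [← pow_add, Nat.add_sub_cancel' hl]
  have hdvd : (-z * q ^ l) % (q ^ m - 1) * q ^ (m - l) + z
      = (q ^ m - 1) * (-z - (-z * q ^ l) / (q ^ m - 1) * q ^ (m - l)) := by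
    rw [Int.emod_def]
    linear_combination (-z) * hsplit
  have hpos : 0 < (-z * q ^ l) % (q ^ m - 1) * q ^ (m - l) + z := by
    have := Int.emod_nonneg (-z * q ^ l) hn.ne'
    positivity
  linarith [Int.le_of_dvd hpos ⟨_, hdvd⟩]

theorem pow_three_mul_le_sub_pow_succ_mul_pow_sub_one {q : ℤ} (hq : 2 ≤ q) {m k : ℕ}
    (hk : 1 ≤ k) (hmk : 2 * k + 1 ≤ m) (hmk' : k + 3 ≤ m) :
    q ^ (3 * k) ≤ (q ^ m - q ^ (k + 1)) * (q ^ k - 1) := by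
  have hpow {i j : ℕ} (h : i ≤ j) : q ^ i ≤ q ^ j := pow_le_pow_right₀ (by linarith) h
  have hqa : q ≤ q ^ k := by simpa using hpow hk
  have hMa : q * (q ^ k) ^ 2 ≤ q ^ m := by rw [← pow_mul, ← pow_succ']; exact hpow (by omega)
  have hMq : q ^ 3 * q ^ k ≤ q ^ m := by rw [← pow_add]; exact hpow (by omega)
  rw [pow_mul', pow_succ' q k]
  set a := q ^ k
  have ha0 : 0 ≤ a := by linarith
  have ha1 : 0 ≤ a - 1 := by linarith
  -- `a < 4` forces `k = 1`, where `2 * k + 1 ≤ m` is too weak and `k + 3 ≤ m` is needed.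
  rcases le_or_gt 4 a with h4 | h4
  · nlinarith [mul_nonneg (sub_nonneg.2 hMa) ha1,
      mul_nonneg (mul_nonneg (sub_nonneg.2 hq) ha0) (mul_nonneg ha1 ha1),
      mul_nonneg ha0 (mul_nonneg (sub_nonneg.2 h4) ha0)]
  · have hq3 : 6 ≤ q ^ 3 - q := by
      nlinarith [mul_nonneg (sub_nonneg.2 hq) (by positivity : (0 : ℤ) ≤ q ^ 2 + 2 * q + 3)]
    nlinarith [mul_nonneg (sub_nonneg.2 hMq) ha1,
      mul_nonneg (mul_nonneg (sub_nonneg.2 hq3) ha0) ha1]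

theorem stmt_8_general (q : ℤ) (hq : 2 ≤ q) (m : ℕ) (hm : 3 < m) (x y : ℤ) (k l : ℕ)
    (hy1 : 1 ≤ y)
    (hxy : x * y < q ^ m - 1 - q ^ (m / 2))
    (hxk : q ^ k ≤ x) (hxk' : x ≤ q ^ (k + 1) - 1) (hk : k ≤ (m - 1) / 2)
    (hl : m - k - 1 < l) (hl' : l ≤ m - 1) :
    ((-x * q ^ l) % (q ^ m - 1)) * ((-y * q ^ l) % (q ^ m - 1)) ≥ q ^ m - 1 := by
  have hpow {i j : ℕ} (h : i ≤ j) : q ^ i ≤ q ^ j := pow_le_pow_right₀ (by linarith) h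
  have hn : 0 < q ^ m - 1 := by linarith [hpow (show 1 ≤ m by omega), pow_one q]
  have ha : 0 < q ^ k := by positivity
  have hlm : l ≤ m := by omega
  have hx := sub_le_neg_mul_pow_emod_mul_pow (by positivity) hlm hn (ha.trans_le hxk)
  have hy := sub_le_neg_mul_pow_emod_mul_pow (by positivity) hlm hn hy1
  have hrx := Int.emod_nonneg (-x * q ^ l) hn.ne'
  have hya : y * q ^ k ≤ q ^ m - 1 := by
    linarith [mul_le_mul_of_nonneg_left hxk (by linarith : (0 : ℤ) ≤ y),
      (by positivity : (0 : ℤ) < q ^ (m / 2))]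
  have hqa : q ^ (k + 1) ≤ q ^ m := hpow (by omega)
  have hpa : q ^ (m - l) * q ^ (m - l) * q ^ k ≤ q ^ (3 * k) := by
    rw [← pow_add, ← pow_add]; exact hpow (by omega)
  have hcube := pow_three_mul_le_sub_pow_succ_mul_pow_sub_one hq (m := m) (k := k)
    (by omega) (by omega) (by omega)
  set n := q ^ m - 1
  set p := q ^ (m - l)
  set a := q ^ k
  refine le_of_mul_le_mul_right (a := p * p * a) ?_ (by positivity)
  calc n * (p * p * a) ≤ n * ((q ^ m - q ^ (k + 1)) * (a - 1)) :=
        mul_le_mul_of_nonneg_left (hpa.trans hcube) hn.le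
    _ ≤ (q ^ m - q ^ (k + 1)) * (n - y) * a := by
        linear_combination mul_nonneg (sub_nonneg.2 hqa) (sub_nonneg.2 hya)
    _ ≤ (-x * q ^ l % n * p) * (-y * q ^ l % n * p) * a :=
        mul_le_mul_of_nonneg_right
          (mul_le_mul (by linarith) hy (by nlinarith) (by positivity)) ha.le
    _ = (-x * q ^ l % n) * (-y * q ^ l % n) * (p * p * a) := by ring

/-- Case iii) of Lemma 4: for m - k - 1 < l ≤ m - 1 the product of residues is at
least q^m - 1. -/
theorem stmt_8 (q : ℤ) (hq : 2 ≤ q) (m : ℕ) (hm : 3 < m) (x y : ℤ) (k l : ℕ)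
    (hx1 : 1 ≤ x) (hxn : x < q ^ m - 1) (hy1 : 1 ≤ y) (hyn : y < q ^ m - 1)
    (hxy : x * y < q ^ m - 1 - q ^ (m / 2))
    (hxk : q ^ k ≤ x) (hxk' : x ≤ q ^ (k + 1) - 1) (hk : k ≤ (m - 1) / 2)
    (hl : m - k - 1 < l) (hl' : l ≤ m - 1) :
    ((-x * q ^ l) % (q ^ m - 1)) * ((-y * q ^ l) % (q ^ m - 1)) ≥ q ^ m - 1 :=
  stmt_8_general q hq m hm x y k l hy1 hxy hxk hxk' hk hl hl'
end

section
/- Let q ≥ 2, m > 3, n = q^{2m} - 1. For all integers x, y with 1 ≤ x, y < n and x·y < (q^m - 1)^2 if m is odd (resp. x·y < q^{2m} - 1 - q^{m-1} if m is even), and for all odd l ∈ {1, 3, ..., 2m-1}: ((-x·q^l) mod n)·((-y·q^l) mod n) ≥ (q^m - 1)^2 if m is odd (resp. ≥ q^{2m} - 1 - q^{m-1} if m is even). -/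
/-!
Put `S = q ^ m`, `n = S ^ 2 - 1`, `s = q ^ l`, `s' = q ^ (2 * m - l)`. Since `s * s' = n + 1`,
the map `z ↦ (-z * s) % n` is inverted by `z ↦ (-z * s') % n`; as `2 * m - l` is odd and less
than `m` when `l > m`, this reduces the claim to `l ≤ m`. There, take `x ≤ y`, so `x < S ≤ s'`
and `x` is sent to `n - s * x`.
If `l < m`, then `2 * s ≤ S`, so `n - s * x` is about `n / 2` or more, and the product is large unless
`y` is sent to `1`, i.e. `y = n - s'`, which forces `x = 1`.
If `l = m` (only for odd `m`), the image `w` of `y` is at least `S` unless `y = n - S * w`, and then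
`x * (n - S * w) < (S - 1) ^ 2` forces `(n - S * x) * w ≥ (S - 1) ^ 2` by an elementary estimate.
-/

section NegMulEmod

variable {n s s' : ℤ}

theorem neg_mul_emod_eq_of_lt (hss' : s * s' = n + 1) (hs : 1 ≤ s) {x : ℤ} (hx : 0 < x)
    (hxs' : x < s') : (-x * s) % n = n - s * x := by
  have hsx : s * x ≤ n := by nlinarith
  rw [show -x * s = n - s * x + n * (-1) by ring, Int.add_mul_emod_self_left,
    Int.emod_eq_of_lt (by linarith) (by nlinarith)]

theorem neg_mul_emod_neg_mul_emod_s12 (hss' : s * s' = n + 1) {x : ℤ} (hx : 0 ≤ x) (hxn : x < n) :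
    (-((-x * s) % n) * s') % n = x := by
  have h : -((-x * s) % n) * s' ≡ x [ZMOD n] :=
    calc -((-x * s) % n) * s' ≡ -(-x * s) * s' [ZMOD n] := ((Int.mod_modEq _ _).neg).mul_right _
      _ = x + n * x := by linear_combination x * hss'
      _ ≡ x [ZMOD n] := by simp [Int.ModEq]
  rw [h, Int.emod_eq_of_lt hx hxn]

theorem neg_mul_emod_pos (hss' : s * s' = n + 1) {x : ℤ} (hx : 0 < x) (hxn : x < n) :
    0 < (-x * s) % n := by
  refine (Int.emod_nonneg _ (by omega)).lt_of_ne fun h => ?_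
  have := neg_mul_emod_neg_mul_emod_s12 hss' hx.le hxn
  rw [← h, neg_zero, zero_mul, Int.zero_emod] at this
  omega

end NegMulEmod

theorem sq_sub_one_le_of_mul_lt {S u w : ℤ} (hu : 1 ≤ u) (huS : u ≤ S - 1) (hwS : w ≤ S - 1)
    (h : u * (S ^ 2 - 1 - S * w) < (S - 1) ^ 2) :
    (S - 1) ^ 2 ≤ (S ^ 2 - 1 - S * u) * w := by
  have huv : u * (S - w) ≤ S - 2 := by
    by_contra! huv
    nlinarith
  nlinarith [mul_nonneg (sub_nonneg.2 hu) (show 0 ≤ S - w - 1 by omega)]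

theorem le_neg_mul_emod_mul_of_two_mul_le {S s s' r x y : ℤ} (hss' : s * s' = S ^ 2)
    (hs : 2 ≤ s) (h2s : 2 * s ≤ S) (hsr : s ≤ r) (hx : 1 ≤ x) (hxy : x ≤ y)
    (hy : y < S ^ 2 - 1) (hprod : x * y < S ^ 2 - 1 - r) :
    S ^ 2 - 1 - r ≤ (-x * s) % (S ^ 2 - 1) * ((-y * s) % (S ^ 2 - 1)) := by
  have hss'n : s * s' = S ^ 2 - 1 + 1 := by rw [hss']; ring
  have hs'ss' : 2 * s' ≤ S ^ 2 := by nlinarith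
  have hxS : x < S := by nlinarith
  have hAx : (-x * s) % (S ^ 2 - 1) = S ^ 2 - 1 - s * x :=
    neg_mul_emod_eq_of_lt hss'n (by omega) (by omega) (by nlinarith)
  have hAy := neg_mul_emod_pos hss'n (by omega) hy
  rw [hAx]
  rcases (show 2 ≤ (-y * s) % (S ^ 2 - 1) ∨ (-y * s) % (S ^ 2 - 1) = 1 by omega) with hAy2 | hAy1
  · have hsx : 2 * (s * x) ≤ S * (S - 1) := by nlinarith
    calc S ^ 2 - 1 - r ≤ (S ^ 2 - 1 - s * x) * 2 := by nlinarith
      _ ≤ _ := mul_le_mul_of_nonneg_left hAy2 (by nlinarith)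
  · have hy' : y = S ^ 2 - 1 - s' := by
      rw [← neg_mul_emod_neg_mul_emod_s12 hss'n (by omega) hy, hAy1,
        neg_mul_emod_eq_of_lt (by rw [mul_comm, hss'n]) (by nlinarith) one_pos (by nlinarith)]
      ring
    have hx1 : x = 1 := by nlinarith
    subst hx1
    rw [hAy1]
    linarith

theorem sq_sub_one_le_neg_mul_emod_mul {S x y : ℤ} (hS : 2 ≤ S) (hx : 1 ≤ x) (hxy : x ≤ y)
    (hy : y < S ^ 2 - 1) (hprod : x * y < (S - 1) ^ 2) :
    (S - 1) ^ 2 ≤ (-x * S) % (S ^ 2 - 1) * ((-y * S) % (S ^ 2 - 1)) := by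
  have hSS : S * S = S ^ 2 - 1 + 1 := by ring
  have hxS : x ≤ S - 2 := by nlinarith
  have hAx : (-x * S) % (S ^ 2 - 1) = S ^ 2 - 1 - S * x :=
    neg_mul_emod_eq_of_lt hSS (by omega) (by omega) (by omega)
  have hAy := neg_mul_emod_pos hSS (by omega) hy
  rw [hAx]
  rcases le_or_gt S ((-y * S) % (S ^ 2 - 1)) with hAyS | hAyS
  · calc (S - 1) ^ 2 ≤ (S ^ 2 - 1 - S * x) * S := by nlinarith
      _ ≤ _ := mul_le_mul_of_nonneg_left hAyS (by nlinarith)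
  · have hy' : y = S ^ 2 - 1 - S * ((-y * S) % (S ^ 2 - 1)) := by
      conv_lhs => rw [← neg_mul_emod_neg_mul_emod_s12 hSS (by omega) hy]
      exact neg_mul_emod_eq_of_lt hSS (by omega) hAy hAyS
    rw [hy'] at hprod
    exact sq_sub_one_le_of_mul_lt hx (by omega) (by omega) hprod

def hermitianBound (q : ℤ) (m : ℕ) : ℤ :=
  if m % 2 = 1 then (q ^ m - 1) ^ 2 else q ^ (2 * m) - 1 - q ^ (m - 1)

theorem hermitianBound_le_of_le {q : ℤ} (hq : 2 ≤ q) {m l : ℕ} (hl : Odd l) (hlm : l ≤ m)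
    {x y : ℤ} (hx : 1 ≤ x) (hxn : x < q ^ (2 * m) - 1) (hy : 1 ≤ y) (hyn : y < q ^ (2 * m) - 1)
    (hprod : x * y < hermitianBound q m) :
    hermitianBound q m ≤ (-x * q ^ l) % (q ^ (2 * m) - 1) * ((-y * q ^ l) % (q ^ (2 * m) - 1)) := by
  wlog hxy : x ≤ y generalizing x y
  · rw [mul_comm]
    exact this hy hyn hx hxn (by rwa [mul_comm]) (by omega)
  have hS2 : q ^ (2 * m) = (q ^ m) ^ 2 := pow_mul' q 2 m
  have hss' : q ^ l * q ^ (2 * m - l) = (q ^ m) ^ 2 := by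
    rw [← pow_add, ← hS2]
    congr 1
    omega
  have hl0 : 0 < l := hl.pos
  have hqm : q ≤ q ^ m := le_self_pow₀ (by omega) (by omega)
  rw [hS2] at hyn ⊢
  rcases hlm.lt_or_eq with hlt | rfl
  · have hs : 2 ≤ q ^ l := hq.trans (le_self_pow₀ (by omega) (by omega))
    have h2s : 2 * q ^ l ≤ q ^ m :=
      calc 2 * q ^ l ≤ q * q ^ l := by gcongr
        _ = q ^ (l + 1) := (pow_succ' q l).symm
        _ ≤ q ^ m := pow_le_pow_right₀ (by omega) hlt
    unfold hermitianBound at hprod ⊢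
    split_ifs at hprod ⊢
    · rw [show (q ^ m - 1) ^ 2 = (q ^ m) ^ 2 - 1 - (2 * q ^ m - 2) by ring] at hprod ⊢
      exact le_neg_mul_emod_mul_of_two_mul_le hss' hs h2s (by omega) hx hxy hyn hprod
    · rw [hS2] at hprod ⊢
      exact le_neg_mul_emod_mul_of_two_mul_le hss' hs h2s
        (pow_le_pow_right₀ (by omega) (by omega)) hx hxy hyn hprod
  · have hodd : l % 2 = 1 := Nat.odd_iff.mp hl
    unfold hermitianBound at hprod ⊢
    rw [if_pos hodd] at hprod ⊢
    exact sq_sub_one_le_neg_mul_emod_mul (hq.trans hqm) hx hxy hyn hprod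

theorem stmt_12_general (q : ℤ) (hq : 2 ≤ q) (m : ℕ) :
    ∀ x y : ℤ, 1 ≤ x → x < q ^ (2 * m) - 1 → 1 ≤ y → y < q ^ (2 * m) - 1 →
      x * y < (if m % 2 = 1 then (q ^ m - 1) ^ 2 else q ^ (2 * m) - 1 - q ^ (m - 1)) →
      ∀ l : ℕ, Odd l → l ≤ 2 * m - 1 →
        ((-x * q ^ l) % (q ^ (2 * m) - 1)) * ((-y * q ^ l) % (q ^ (2 * m) - 1)) ≥
          (if m % 2 = 1 then (q ^ m - 1) ^ 2 else q ^ (2 * m) - 1 - q ^ (m - 1)) := by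
  intro x y hx hxn hy hyn hprod l hl hl2m
  change x * y < hermitianBound q m at hprod
  change hermitianBound q m ≤ _
  rcases le_or_gt l m with hlm | hml
  · exact hermitianBound_le_of_le hq hl hlm hx hxn hy hyn hprod
  have hss' : q ^ l * q ^ (2 * m - l) = q ^ (2 * m) - 1 + 1 := by
    rw [← pow_add, Nat.add_sub_cancel' (by omega : l ≤ 2 * m)]
    ring
  by_contra! hlt
  have key := hermitianBound_le_of_le hq (l := 2 * m - l) (by grind) (by omega)
    (neg_mul_emod_pos hss' (by omega) hxn) (Int.emod_lt_of_pos _ (by omega))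
    (neg_mul_emod_pos hss' (by omega) hyn) (Int.emod_lt_of_pos _ (by omega)) hlt
  rw [neg_mul_emod_neg_mul_emod_s12 hss' (by omega) hxn, neg_mul_emod_neg_mul_emod_s12 hss' (by omega) hyn]
    at key
  omega

/-- Hermitian key inequality: for 1 ≤ x, y < n = q^{2m} - 1 with
x·y < (q^m - 1)^2 (m odd) resp. x·y < q^{2m} - 1 - q^{m-1} (m even), and any odd
l with 1 ≤ l ≤ 2m - 1, the product of residues is at least that same bound. -/
theorem stmt_12 (q : ℤ) (hq : 2 ≤ q) (m : ℕ) (hm : 3 < m) :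
    ∀ x y : ℤ, 1 ≤ x → x < q ^ (2 * m) - 1 → 1 ≤ y → y < q ^ (2 * m) - 1 →
      x * y < (if m % 2 = 1 then (q ^ m - 1) ^ 2 else q ^ (2 * m) - 1 - q ^ (m - 1)) →
      ∀ l : ℕ, Odd l → l ≤ 2 * m - 1 →
        ((-x * q ^ l) % (q ^ (2 * m) - 1)) * ((-y * q ^ l) % (q ^ (2 * m) - 1)) ≥
          (if m % 2 = 1 then (q ^ m - 1) ^ 2 else q ^ (2 * m) - 1 - q ^ (m - 1)) :=
  stmt_12_general q hq m
end

section
/- Let q ≥ 2, m > 3, n = q^{2m} - 1, and suppose 1 ≤ x, y < n with x·y < q^{2m} - 1 - q^{m-1}, x having top nonzero q-ary digit at position k, and l = 2m - k - 1. If ((-x·q^l) mod n)·((-y·q^l) mod n) < q^{2m} - 1, then k = m - 1. -/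
/-!
Write `n = u * v - 1` with `u = q ^ l` and `v = q ^ (k + 1)`. Since `q ^ k ≤ x < v`, the residue of
`-x * u` is `n - x * u ≥ u - 1`, so the residue `b` of `-y * u` is at most `v`. Multiplying by `v`
turns `b ≡ -y * u` into `b * v ≡ -y`, and size forces `y = n - b * v ≥ n - v²`. If `k < m - 1` then
`2 v² ≤ n`, so `x * y < n` leaves only `x = 1`, i.e. `k = 0`; but then `y ≥ n - q²`, contradicting
`y < n - q ^ (m - 1)`.
-/

namespace Int

theorem eq_of_dvd_of_pos_of_lt_two_mul {n s : ℤ} (hdvd : n ∣ s) (hs : 0 < s) (hsn : s < 2 * n) :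
    s = n := by
  obtain ⟨c, rfl⟩ := hdvd
  have hn : 0 < n := by linarith
  have hc0 : 0 < c := pos_of_mul_pos_right hs hn.le
  have hc2 : c < 2 := lt_of_mul_lt_mul_left (by linarith) hn.le
  obtain rfl : c = 1 := by omega
  exact mul_one n

theorem neg_emod_eq_sub_self {t n : ℤ} (ht : 0 < t) (htn : t ≤ n) : -t % n = n - t := by
  rw [← add_mul_emod_self_right (-t) 1 n, emod_eq_of_lt] <;> linarith

end Int

theorem two_mul_pow_le_pow_sub_one {q : ℤ} (hq : 2 ≤ q) {i j : ℕ} (hij : i + 2 ≤ j) :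
    2 * q ^ i ≤ q ^ j - 1 := by
  have hqi : 1 ≤ q ^ i := one_le_pow₀ (by linarith)
  have hq2 : 4 ≤ q ^ 2 := by nlinarith
  calc 2 * q ^ i ≤ q ^ i * q ^ 2 - 1 := by nlinarith
    _ = q ^ (i + 2) - 1 := by rw [pow_add]
    _ ≤ q ^ j - 1 := by gcongr; linarith

section Residues

variable {n u v : ℤ}

theorem le_of_sub_one_le_mul_lt (huv : u * v = n + 1) (hu : 1 ≤ u) {a b : ℤ} (ha : u - 1 ≤ a)
    (hb : 0 ≤ b) (hvu : v ≤ u) (hab : a * b < n) : b ≤ v := by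
  by_contra! hvb
  have : (u - 1) * (v + 1) ≤ a * b :=
    (mul_le_mul_of_nonneg_left hvb (by linarith)).trans (mul_le_mul_of_nonneg_right ha hb)
  linarith

theorem dvd_add_neg_mul_emod_mul (huv : u * v = n + 1) (y : ℤ) : n ∣ y + (-y * u) % n * v := by
  have h : (-y * u) % n * v ≡ -y [ZMOD n] :=
    calc (-y * u) % n * v ≡ -y * u * v [ZMOD n] := (Int.mod_modEq _ _).mul_right v
      _ = -y * n + -y := by rw [mul_assoc, huv]; ring
      _ ≡ 0 + -y [ZMOD n] := (Int.modEq_zero_iff_dvd.mpr (dvd_mul_left n (-y))).add_right _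
      _ = -y := zero_add _
  rw [add_comm]
  simpa using h.dvd.neg_right

theorem eq_one_of_neg_mul_emod_mul_lt (huv : u * v = n + 1) (hu : 1 ≤ u) (hvu : v ≤ u)
    (hvn : 2 * (v * v) ≤ n) {x y : ℤ} (hx : 1 ≤ x) (hxv : x ≤ v - 1) (hy : 1 ≤ y)
    (hxy : x * y < n) (h : (-x * u) % n * ((-y * u) % n) < n) : x = 1 ∧ n - v * v ≤ y := by
  have hxu : u ≤ x * u := le_mul_of_one_le_left (by linarith) hx
  have hxu' : x * u ≤ (v - 1) * u := mul_le_mul_of_nonneg_right hxv (by linarith)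
  have hres : (-x * u) % n = n - x * u := by
    rw [neg_mul]; exact Int.neg_emod_eq_sub_self (by linarith) (by linarith)
  set b := (-y * u) % n
  have hb : 0 ≤ b := Int.emod_nonneg _ (by linarith)
  have hbv : b ≤ v := le_of_sub_one_le_mul_lt huv hu (by linarith) hb hvu (hres ▸ h)
  have hyn : y ≤ x * y := le_mul_of_one_le_left (by linarith) hx
  have hbv0 : 0 ≤ b * v := mul_nonneg hb (by linarith)
  have hbvv : b * v ≤ v * v := mul_le_mul_of_nonneg_right hbv (by linarith)
  have hy_eq : y + b * v = n :=
    Int.eq_of_dvd_of_pos_of_lt_two_mul (dvd_add_neg_mul_emod_mul huv y) (by linarith)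
      (by linarith)
  refine ⟨?_, by linarith⟩
  by_contra hx1
  have : 2 * y ≤ x * y := mul_le_mul_of_nonneg_right (by omega) (by linarith)
  linarith

end Residues

theorem stmt_14_general (q : ℤ) (hq : 2 ≤ q) (m : ℕ) (hm : 3 < m) (x y : ℤ) (k : ℕ)
    (hx1 : 1 ≤ x) (hy1 : 1 ≤ y)
    (hxy : x * y < q ^ (2 * m) - 1 - q ^ (m - 1))
    (hxk : q ^ k ≤ x) (hxk' : x ≤ q ^ (k + 1) - 1) (hk : k ≤ (2 * m - 1) / 2)
    (hsmall : ((-x * q ^ (2 * m - k - 1)) % (q ^ (2 * m) - 1)) *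
      ((-y * q ^ (2 * m - k - 1)) % (q ^ (2 * m) - 1)) < q ^ (2 * m) - 1) :
    k = m - 1 := by
  by_contra hne
  have hkm : k + 2 ≤ m := by omega
  have hq1 : 1 ≤ q := by linarith
  have huv : q ^ (2 * m - k - 1) * q ^ (k + 1) = (q ^ (2 * m) - 1) + 1 := by
    rw [← pow_add, sub_add_cancel]; congr 1; omega
  have hvn : 2 * (q ^ (k + 1) * q ^ (k + 1)) ≤ q ^ (2 * m) - 1 := by
    rw [← pow_add]; exact two_mul_pow_le_pow_sub_one hq (by omega)
  obtain ⟨rfl, hy⟩ := eq_one_of_neg_mul_emod_mul_lt huv (one_le_pow₀ hq1)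
    (pow_le_pow_right₀ hq1 (by omega)) hvn hx1 hxk' hy1
    (hxy.trans_le (sub_le_self _ (by positivity))) hsmall
  obtain rfl : k = 0 := by
    by_contra hk0
    exact (one_lt_pow₀ (by linarith) hk0).not_ge hxk
  have hqm : q ^ 2 ≤ q ^ (m - 1) := pow_le_pow_right₀ hq1 (by omega)
  rw [zero_add, pow_one] at hy
  rw [sq] at hqm
  linarith

/-- Case ii) of Lemma 7: with l = 2m - k - 1, if the product of residues is less
than q^{2m} - 1 then k = m - 1. -/
theorem stmt_14 (q : ℤ) (hq : 2 ≤ q) (m : ℕ) (hm : 3 < m) (x y : ℤ) (k : ℕ)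
    (hx1 : 1 ≤ x) (hxn : x < q ^ (2 * m) - 1) (hy1 : 1 ≤ y) (hyn : y < q ^ (2 * m) - 1)
    (hxy : x * y < q ^ (2 * m) - 1 - q ^ (m - 1))
    (hxk : q ^ k ≤ x) (hxk' : x ≤ q ^ (k + 1) - 1) (hk : k ≤ (2 * m - 1) / 2)
    (hsmall : ((-x * q ^ (2 * m - k - 1)) % (q ^ (2 * m) - 1)) *
      ((-y * q ^ (2 * m - k - 1)) % (q ^ (2 * m) - 1)) < q ^ (2 * m) - 1) :
    k = m - 1 :=
  stmt_14_general q hq m hm x y k hx1 hy1 hxy hxk hxk' hk hsmall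
end

section
/- Let q ≥ 2, m ≥ 2, n = q^m - 1, and x ∈ {1, ..., n-1} with x = Σ_{i=0}^{k} x_i q^i and x_k ≠ 0 (top digit at position k). Then for any l with 0 ≤ l < m - k - 1, the residue (-x·q^l mod n) has q-ary digit q - 1 at position m - 1, and hence (-x·q^l mod n) ≥ (q-1)·q^{m-1}. -/
/-- If x has top nonzero q-ary digit at position k and 0 ≤ l < m - k - 1, then
(-x·q^l mod n) has q-ary digit q - 1 at position m - 1, hence is at least
(q-1)·q^{m-1}. -/
theorem stmt_17 (q : ℕ) (hq : 2 ≤ q) (m : ℕ) (hm : 2 ≤ m) (x : ℕ) (k l : ℕ)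
    (hx1 : 1 ≤ x) (hxn : x < q ^ m - 1)
    (hxk : q ^ k ≤ x) (hxk' : x ≤ q ^ (k + 1) - 1)
    (hl : l < m - k - 1) :
    ((-(x : ℤ) * (q : ℤ) ^ l) % ((q : ℤ) ^ m - 1)).toNat / q ^ (m - 1) % q = q - 1 ∧
    ((q : ℤ) - 1) * (q : ℤ) ^ (m - 1) ≤ (-(x : ℤ) * (q : ℤ) ^ l) % ((q : ℤ) ^ m - 1) := by
  have hq0 : 0 < q := by omega
  set y : ℕ := x * q ^ l with hy
  have hy1 : 1 ≤ y := Nat.one_le_iff_ne_zero.mpr (by positivity)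
  -- y < q ^ (m - 1)
  have hylt : y < q ^ (m - 1) := by
    have h1 : y ≤ (q ^ (k + 1) - 1) * q ^ l := Nat.mul_le_mul_right _ hxk'
    have h2 : (q ^ (k + 1) - 1) * q ^ l < q ^ (k + 1) * q ^ l := by
      have : 0 < q ^ l := pow_pos hq0 l
      have : q ^ (k + 1) - 1 < q ^ (k + 1) := by
        have : 0 < q ^ (k + 1) := pow_pos hq0 _
        omega
      exact Nat.mul_lt_mul_of_lt_of_le this (le_refl _) (by positivity)
    have h3 : q ^ (k + 1) * q ^ l ≤ q ^ (m - 1) := by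
      rw [← pow_add]
      exact Nat.pow_le_pow_right hq0 (by omega)
    omega
  have hpow2 : q ^ (m - 1) * q = q ^ m := by
    rw [← pow_succ]
    congr 1
    omega
  have hylt2 : y < q ^ m - 1 := by
    have : 2 * q ^ (m - 1) ≤ q ^ (m - 1) * q := by
      nlinarith [pow_pos hq0 (m - 1)]
    omega
  -- Integer mod computation
  have hN0 : (0 : ℤ) < (q : ℤ) ^ m - 1 := by
    have : (1 : ℤ) < (q : ℤ) ^ m := one_lt_pow₀ (by exact_mod_cast hq) (by omega)
    linarith
  have hmod : (-(x : ℤ) * (q : ℤ) ^ l) % ((q : ℤ) ^ m - 1)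
      = ((q : ℤ) ^ m - 1) - (y : ℤ) := by
    have heq : (-(x : ℤ) * (q : ℤ) ^ l)
        = (((q : ℤ) ^ m - 1) - (y : ℤ)) + ((q : ℤ) ^ m - 1) * (-1) := by
      push_cast [hy]; ring
    rw [heq, Int.add_mul_emod_self_left, Int.emod_eq_of_lt]
    · have h1 : 1 ≤ q ^ m := Nat.one_le_pow _ _ hq0
      have : (y : ℤ) + 2 ≤ (q : ℤ) ^ m := by exact_mod_cast (by omega : y + 2 ≤ q ^ m)
      linarith
    · have : (1 : ℤ) ≤ (y : ℤ) := by exact_mod_cast hy1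
      linarith
  constructor
  · rw [hmod]
    have htn : (((q : ℤ) ^ m - 1) - (y : ℤ)).toNat = q ^ m - 1 - y := by
      have h1 : ((q : ℤ) ^ m - 1) - (y : ℤ) = ((q ^ m - 1 - y : ℕ) : ℤ) := by
        have hq1 : 1 ≤ q ^ m := Nat.one_le_pow _ _ hq0
        push_cast [Nat.cast_sub (by omega : y ≤ q ^ m - 1), Nat.cast_sub hq1]
        ring
      rw [h1, Int.toNat_natCast]
    rw [htn]
    have hdiv : (q ^ m - 1 - y) / q ^ (m - 1) = q - 1 := by
      apply Nat.div_eq_of_lt_le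
      · -- (q-1) * q^(m-1) ≤ q^m - 1 - y
        have hc : q * q ^ (m - 1) = q ^ m := by rw [mul_comm]; exact hpow2
        have hp1 : 1 ≤ q ^ (m - 1) := Nat.one_le_pow _ _ hq0
        rw [Nat.sub_mul, one_mul]
        omega
      · rw [Nat.sub_add_cancel (by omega), Nat.mul_comm, hpow2]
        have : 1 ≤ q ^ m := Nat.one_le_pow _ _ hq0
        omega
    rw [hdiv, Nat.mod_eq_of_lt (by omega)]
  · rw [hmod]
    have hyc : (y : ℤ) < (q : ℤ) ^ (m - 1) := by exact_mod_cast hylt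
    have hpc : ((q : ℤ) ^ (m - 1)) * (q : ℤ) = (q : ℤ) ^ m := by exact_mod_cast hpow2
    nlinarith [hyc, hpc]
end
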